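/- Let N ≥ 1, let θ_L < θ_R be real numbers, and let Λ^N be the probability measure on ℝ^N with density N!/(θ_R − θ_L)^N · 1{θ_L ≤ θ₁ ≤ θ₂ ≤ … ≤ θ_N ≤ θ_R}, i.e. the joint law of the order statistics of N i.i.d. uniform random variables on [θ_L, θ_R]. Let f : ℝ^N → ℝ be continuously differentiable on [θ_L, θ_R]^N and define 𝓛f(θ) = ∫₀¹ u^{−1}[f(θ + u(θ_L − θ₁)δ₁) − f(θ)] du + ∫₀¹ u^{−1}[f(θ + u(θ_R − θ_N)δ_N) − f(θ)] du + ∑_{i=1}^{N−1} ∫₀¹ u^{−1}[f(θ + u(θ_{i+1} − θ_i)δ_i) + f(θ + u(θ_i − θ_{i+1})δ_{i+1}) − 2 f(θ)] du, where δ_i is the i-th coordinate unit vector. Then all integrals converge absolutely and ∫ 𝓛f(θ) Λ^N(dθ) = 0; i.e., the order statistics of N uniforms on [θ_L, θ_R] is stationary for the hidden-parameter model of the boundary-driven harmonic chain. -/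

import Mathlib

open MeasureTheory Real Set

/-- The integrand (with respect to the jump measure `u⁻¹ du` on `(0,1)`) of the generator of
the hidden-parameter model of the boundary-driven harmonic chain on sites `{1,…,N}` with
reservoir parameters `θL, θR`: boundary terms move `θ₁` (resp. `θ_N`) by a fraction `u`
towards `θL` (resp. `θR`), bulk terms move `θ_i` towards `θ_{i+1}` or `θ_{i+1}` towards
`θ_i`. -/
noncomputable def hiddenChainGenInt (N : ℕ) (hN : 0 < N) (θL θR : ℝ)
    (f : (Fin N → ℝ) → ℝ) (θ : Fin N → ℝ) (u : ℝ) : ℝ :=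
  u⁻¹ *
    ((f (Function.update θ ⟨0, hN⟩ (θ ⟨0, hN⟩ + u * (θL - θ ⟨0, hN⟩))) - f θ) +
     (f (Function.update θ ⟨N - 1, by omega⟩ (θ ⟨N - 1, by omega⟩ +
          u * (θR - θ ⟨N - 1, by omega⟩))) - f θ) +
     ∑ i : Fin (N - 1),
       (f (Function.update θ ⟨i.1, by omega⟩ (θ ⟨i.1, by omega⟩ +
            u * (θ ⟨i.1 + 1, by omega⟩ - θ ⟨i.1, by omega⟩))) +
        f (Function.update θ ⟨i.1 + 1, by omega⟩ (θ ⟨i.1 + 1, by omega⟩ +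
            u * (θ ⟨i.1, by omega⟩ - θ ⟨i.1 + 1, by omega⟩))) -
        2 * f θ))

/-!
Group the generator by sites: site `j` jumps towards its right and towards its left neighbour,
the reservoirs `θR` and `θL` being the neighbours of the last and the first site. The substitution
`z = θ j + u (t - θ j)` turns the `u⁻¹ du`-integral of a jump towards `t` into
`∫_{θ j}^{t} (f (θ with θ j := z) - f θ) / (z - θ j) dz`. Inserting `z` next to `θ j` makes
`(θ, z)` a point `η` of the ordered simplex in one more dimension, so by Fubini the two jumps of
site `j` integrate to `±∫ A_j` for the same bounded function
`A_j η = (f (η without η_j) - f (η without η_{j+1})) / (η_{j+1} - η_j)` (`deletionSlope`),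
and cancel.
Being `C¹` on the compact convex box, `f` is Lipschitz there, which bounds all integrands.
-/

open Function
open scoped NNReal

lemma Fin.monotone_insertNth_iff {α : Type*} [Preorder α] {n : ℕ} (q : Fin (n + 1)) (x : α)
    (f : Fin n → α) :
    Monotone (q.insertNth x f) ↔
      Monotone f ∧ (∀ i, i.castSucc < q → f i ≤ x) ∧ (∀ i, q ≤ i.castSucc → x ≤ f i) := by
  refine ⟨fun h ↦ ⟨fun a b hab ↦ ?_, fun i hlt ↦ ?_, fun i hle ↦ ?_⟩, ?_⟩
  · simpa using h ((strictMono_succAbove q).monotone hab)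
  · have : q.succAbove i < q := by simp [succAbove_of_castSucc_lt, hlt]
    simpa using h this.le
  · have : q < q.succAbove i := by simp [succAbove_of_le_castSucc, hle, ← le_castSucc_iff]
    simpa using h this.le
  · rintro ⟨h, hlt, hgt⟩ a b hab
    cases a using succAboveCases q <;> cases b using succAboveCases q
    · simp
    · rename_i j
      have : q ≤ j.castSucc := by
        simpa [lt_succAbove_iff_le_castSucc] using lt_of_le_of_ne hab (succAbove_ne q j).symm
      simpa using hgt _ this
    · rename_i j
      have : j.castSucc < q := by
        simpa [succAbove_lt_iff_castSucc_lt] using lt_of_le_of_ne hab (succAbove_ne q j)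
      simpa using hlt _ this
    · simpa using h <| (strictMono_succAbove _).le_iff_le.mp hab

lemma Fin.removeNth_castSucc_eq_update {α : Type*} {n : ℕ} (j : Fin n) (η : Fin (n + 1) → α) :
    Fin.removeNth j.castSucc η = update (Fin.removeNth j.succ η) j (η j.succ) := by
  ext k
  rcases eq_or_ne k j with rfl | hk
  · simp [Fin.removeNth_apply]
  · simp only [Fin.removeNth_apply, update_of_ne hk]
    congr 1
    have hk' : (k : ℕ) ≠ j := Fin.val_ne_of_ne hk
    simp only [Fin.succAbove, Fin.lt_def, Fin.val_castSucc, Fin.val_succ]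
    split_ifs <;> ext <;> simp <;> omega

lemma Fin.removeNth_succ_eq_update {α : Type*} {n : ℕ} (j : Fin n) (η : Fin (n + 1) → α) :
    Fin.removeNth j.succ η = update (Fin.removeNth j.castSucc η) j (η j.castSucc) := by
  rw [Fin.removeNth_castSucc_eq_update, update_idem, eq_comm, update_eq_self_iff]
  simp [Fin.removeNth_apply]

lemma dist_update_self_le {n : ℕ} (x : Fin n → ℝ) (j : Fin n) (a : ℝ) :
    dist (update x j a) x ≤ dist a (x j) := by
  refine (dist_pi_le_iff dist_nonneg).2 fun k ↦ ?_
  rcases eq_or_ne k j with rfl | hk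
  · simp
  · simp [hk]

lemma LipschitzOnWith.abs_sub_update_le {n : ℕ} {s : Set (Fin n → ℝ)} {f : (Fin n → ℝ) → ℝ}
    {K : ℝ≥0} (hf : LipschitzOnWith K f s) {x : Fin n → ℝ} (hx : x ∈ s) {j : Fin n} {a : ℝ}
    (hxa : update x j a ∈ s) : |f (update x j a) - f x| ≤ K * |a - x j| := by
  rw [← Real.dist_eq, ← Real.dist_eq]
  exact (hf.dist_le_mul _ hxa _ hx).trans (by gcongr; exact dist_update_self_le x j a)

namespace HiddenChain

variable {n : ℕ} {θL θR : ℝ}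

def orderedSimplex (n : ℕ) (θL θR : ℝ) : Set (Fin n → ℝ) :=
  {θ | Monotone θ ∧ ∀ i, θ i ∈ Icc θL θR}

/-- `[gapLeft θL θ m, gapRight θR θ m]` is the `m`-th gap `[θ (m - 1), θ m]` of `θ`, where
`θ (-1) = θL` and `θ n = θR`. -/
def gapLeft (θL : ℝ) (θ : Fin n → ℝ) : Fin (n + 1) → ℝ := Fin.cons θL θ

def gapRight (θR : ℝ) (θ : Fin n → ℝ) : Fin (n + 1) → ℝ := Fin.snoc θ θR

lemma gapLeft_le_iff {θ : Fin n → ℝ} (hθ : θ ∈ orderedSimplex n θL θR) (m : Fin (n + 1))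
    (z : ℝ) : gapLeft θL θ m ≤ z ↔ θL ≤ z ∧ ∀ i, i.castSucc < m → θ i ≤ z := by
  cases m using Fin.cases with
  | zero => simp [gapLeft]
  | succ k =>
    simp only [gapLeft, Fin.cons_succ, Fin.castSucc_lt_succ_iff]
    exact ⟨fun h ↦ ⟨(hθ.2 k).1.trans h, fun i hi ↦ (hθ.1 hi).trans h⟩, fun h ↦ h.2 k le_rfl⟩

lemma le_gapRight_iff {θ : Fin n → ℝ} (hθ : θ ∈ orderedSimplex n θL θR) (m : Fin (n + 1))
    (z : ℝ) : z ≤ gapRight θR θ m ↔ z ≤ θR ∧ ∀ i, m ≤ i.castSucc → z ≤ θ i := by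
  cases m using Fin.lastCases with
  | last => simp [gapRight]
  | cast k =>
    simp only [gapRight, Fin.snoc_castSucc, Fin.castSucc_le_castSucc_iff]
    exact ⟨fun h ↦ ⟨h.trans (hθ.2 k).2, fun i hi ↦ h.trans (hθ.1 hi)⟩, fun h ↦ h.2 k le_rfl⟩

lemma gapLeft_castSucc_le {θ : Fin n → ℝ} (hθ : θ ∈ orderedSimplex n θL θR) (j : Fin n) :
    gapLeft θL θ j.castSucc ≤ θ j :=
  (gapLeft_le_iff hθ _ _).2 ⟨(hθ.2 j).1, fun _ hi ↦ hθ.1 (Fin.castSucc_lt_castSucc_iff.1 hi).le⟩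

lemma le_gapRight_succ {θ : Fin n → ℝ} (hθ : θ ∈ orderedSimplex n θL θR) (j : Fin n) :
    θ j ≤ gapRight θR θ j.succ :=
  (le_gapRight_iff hθ _ _).2 ⟨(hθ.2 j).2, fun _ hi ↦ hθ.1 (Fin.succ_le_castSucc_iff.1 hi).le⟩

lemma gapLeft_castSucc_mem_Icc {θ : Fin n → ℝ} (hθ : θ ∈ orderedSimplex n θL θR) (j : Fin n) :
    gapLeft θL θ j.castSucc ∈ Icc θL θR :=
  ⟨((gapLeft_le_iff hθ _ _).1 le_rfl).1, (gapLeft_castSucc_le hθ j).trans (hθ.2 j).2⟩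

lemma gapRight_succ_mem_Icc {θ : Fin n → ℝ} (hθ : θ ∈ orderedSimplex n θL θR) (j : Fin n) :
    gapRight θR θ j.succ ∈ Icc θL θR :=
  ⟨(hθ.2 j).1.trans (le_gapRight_succ hθ j), ((le_gapRight_iff hθ _ _).1 le_rfl).1⟩

lemma continuous_gapLeft_apply (m : Fin (n + 1)) :
    Continuous fun θ : Fin n → ℝ ↦ gapLeft θL θ m :=
  (continuous_apply m).comp
    (continuous_const.finCons (A := fun _ ↦ ℝ) (continuous_id (X := Fin n → ℝ)))

lemma continuous_gapRight_apply (m : Fin (n + 1)) :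
    Continuous fun θ : Fin n → ℝ ↦ gapRight θR θ m :=
  (continuous_apply m).comp
    ((continuous_id (X := Fin n → ℝ)).finSnoc (A := fun _ ↦ ℝ) continuous_const)

lemma insertNth_mem_orderedSimplex_iff (m : Fin (n + 1)) (z : ℝ) (θ : Fin n → ℝ) :
    m.insertNth z θ ∈ orderedSimplex (n + 1) θL θR ↔
      θ ∈ orderedSimplex n θL θR ∧ z ∈ Icc (gapLeft θL θ m) (gapRight θR θ m) := by
  simp only [orderedSimplex, mem_ofPred_eq, Fin.monotone_insertNth_iff,
    Fin.forall_iff_succAbove m, Fin.insertNth_apply_same, Fin.insertNth_apply_succAbove]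
  constructor
  · rintro ⟨⟨hmono, hlo, hhi⟩, hz, hbox⟩
    have hθ : θ ∈ orderedSimplex n θL θR := ⟨hmono, hbox⟩
    exact ⟨hθ, (gapLeft_le_iff hθ m z).2 ⟨hz.1, hlo⟩, (le_gapRight_iff hθ m z).2 ⟨hz.2, hhi⟩⟩
  · rintro ⟨hθ, hlo, hhi⟩
    obtain ⟨hzL, hlo⟩ := (gapLeft_le_iff hθ m z).1 hlo
    obtain ⟨hzR, hhi⟩ := (le_gapRight_iff hθ m z).1 hhi
    exact ⟨⟨hθ.1, hlo, hhi⟩, ⟨hzL, hzR⟩, hθ.2⟩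

lemma orderedSimplex_eq_inter :
    orderedSimplex n θL θR = {θ | Monotone θ} ∩ Icc (fun _ ↦ θL) (fun _ ↦ θR) := by
  ext θ
  simp [orderedSimplex, Pi.le_def, forall_and]

lemma orderedSimplex_subset_Icc : orderedSimplex n θL θR ⊆ Icc (fun _ ↦ θL) (fun _ ↦ θR) := by
  rw [orderedSimplex_eq_inter]
  exact inter_subset_right

lemma isCompact_orderedSimplex : IsCompact (orderedSimplex n θL θR) := by
  rw [orderedSimplex_eq_inter]
  exact isCompact_Icc.inter_left isClosed_monotone

lemma measurableSet_orderedSimplex : MeasurableSet (orderedSimplex n θL θR) :=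
  isCompact_orderedSimplex.isClosed.measurableSet

lemma integral_orderedSimplex_succ (m : Fin (n + 1)) {Φ : (Fin (n + 1) → ℝ) → ℝ}
    (hΦ : IntegrableOn Φ (orderedSimplex (n + 1) θL θR)) :
    ∫ η in orderedSimplex (n + 1) θL θR, Φ η =
      ∫ θ in orderedSimplex n θL θR, ∫ z in Icc (gapLeft θL θ m) (gapRight θR θ m),
        Φ (m.insertNth z θ) := by
  set F := (orderedSimplex (n + 1) θL θR).indicator Φ
  have he := (volume_preserving_piFinSuccAbove (fun _ : Fin (n + 1) ↦ ℝ) m).symm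
  have hF : Integrable (fun p : ℝ × (Fin n → ℝ) ↦ F (m.insertNth p.1 p.2))
      ((volume : Measure ℝ).prod volume) :=
    (he.integrable_comp_emb (MeasurableEquiv.measurableEmbedding _)).2
      ((integrable_indicator_iff measurableSet_orderedSimplex).2 hΦ)
  have hfiber (θ : Fin n → ℝ) : ∫ z, F (m.insertNth z θ) = (orderedSimplex n θL θR).indicator
      (fun θ ↦ ∫ z in Icc (gapLeft θL θ m) (gapRight θR θ m), Φ (m.insertNth z θ)) θ := by
    by_cases hθ : θ ∈ orderedSimplex n θL θR
    · rw [indicator_of_mem hθ, ← integral_indicator measurableSet_Icc]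
      congr 1 with z
      simp only [F, indicator, insertNth_mem_orderedSimplex_iff, hθ, true_and]
    · simp [F, indicator, insertNth_mem_orderedSimplex_iff, hθ]
  calc ∫ η in orderedSimplex (n + 1) θL θR, Φ η = ∫ η, F η :=
        (integral_indicator measurableSet_orderedSimplex).symm
    _ = ∫ p : ℝ × (Fin n → ℝ), F (m.insertNth p.1 p.2) := (he.integral_comp' F).symm
    _ = ∫ θ, ∫ z, F (m.insertNth z θ) := integral_prod_symm _ hF
    _ = _ := by simp_rw [hfiber]; exact integral_indicator measurableSet_orderedSimplex

lemma update_mem_Icc {θ : Fin n → ℝ} (hθ : θ ∈ Icc (fun _ ↦ θL) (fun _ ↦ θR)) (j : Fin n)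
    {a : ℝ} (ha : a ∈ Icc θL θR) : update θ j a ∈ Icc (fun _ ↦ θL) (fun _ ↦ θR) :=
  ⟨le_update_iff.2 ⟨ha.1, fun k _ ↦ hθ.1 k⟩, update_le_iff.2 ⟨ha.2, fun k _ ↦ hθ.2 k⟩⟩

lemma removeNth_mem_Icc {η : Fin (n + 1) → ℝ} (hη : η ∈ Icc (fun _ ↦ θL) (fun _ ↦ θR))
    (p : Fin (n + 1)) : Fin.removeNth p η ∈ Icc (fun _ ↦ θL) (fun _ ↦ θR) :=
  ⟨fun _ ↦ hη.1 _, fun _ ↦ hη.2 _⟩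

section Slopes

variable (f : (Fin n → ℝ) → ℝ) {K : ℝ≥0}

noncomputable def coordSlope (θ : Fin n → ℝ) (j : Fin n) (z : ℝ) : ℝ :=
  (f (update θ j z) - f θ) / (z - θ j)

noncomputable def deletionSlope (j : Fin n) (η : Fin (n + 1) → ℝ) : ℝ :=
  (f (Fin.removeNth j.castSucc η) - f (Fin.removeNth j.succ η)) / (η j.succ - η j.castSucc)

lemma deletionSlope_insertNth_succ (j : Fin n) (z : ℝ) (θ : Fin n → ℝ) :
    deletionSlope f j (j.succ.insertNth z θ) = coordSlope f θ j z := by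
  have h : (j.succ.insertNth z θ : Fin (n + 1) → ℝ) j.castSucc = θ j := by
    rw [← Fin.succAbove_succ_self, Fin.insertNth_apply_succAbove]
  simp [deletionSlope, coordSlope, Fin.removeNth_castSucc_eq_update, h]

lemma deletionSlope_insertNth_castSucc (j : Fin n) (z : ℝ) (θ : Fin n → ℝ) :
    deletionSlope f j (j.castSucc.insertNth z θ) = coordSlope f θ j z := by
  have h : (j.castSucc.insertNth z θ : Fin (n + 1) → ℝ) j.succ = θ j := by
    rw [← Fin.succAbove_castSucc_self, Fin.insertNth_apply_succAbove]
  simp only [deletionSlope, coordSlope, Fin.removeNth_succ_eq_update, Fin.removeNth_insertNth,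
    Fin.insertNth_apply_same, h]
  rw [← neg_sub (f θ), ← neg_sub (θ j), neg_div_neg_eq]

lemma abs_deletionSlope_le (hf : LipschitzOnWith K f (Icc (fun _ ↦ θL) (fun _ ↦ θR)))
    (j : Fin n) {η : Fin (n + 1) → ℝ} (hη : η ∈ Icc (fun _ ↦ θL) (fun _ ↦ θR)) :
    |deletionSlope f j η| ≤ K := by
  have hlip := hf.abs_sub_update_le (removeNth_mem_Icc hη j.succ) (a := η j.succ) (j := j)
    (by rw [← Fin.removeNth_castSucc_eq_update]; exact removeNth_mem_Icc hη _)
  rw [← Fin.removeNth_castSucc_eq_update, Fin.removeNth_apply, Fin.succAbove_succ_self] at hlip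
  rw [deletionSlope, abs_div]
  exact div_le_of_le_mul₀ (abs_nonneg _) K.coe_nonneg hlip

lemma integrableOn_deletionSlope (hf : LipschitzOnWith K f (Icc (fun _ ↦ θL) (fun _ ↦ θR)))
    (j : Fin n) : IntegrableOn (deletionSlope f j) (orderedSimplex (n + 1) θL θR) := by
  have hremove (p : Fin (n + 1)) :
      ContinuousOn (fun η ↦ f (Fin.removeNth p η)) (orderedSimplex (n + 1) θL θR) :=
    hf.continuousOn.comp (continuous_pi fun _ ↦ continuous_apply _).continuousOn
      fun η hη ↦ removeNth_mem_Icc (orderedSimplex_subset_Icc hη) p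
  have hden : Measurable fun η : Fin (n + 1) → ℝ ↦ (η j.succ - η j.castSucc)⁻¹ := by fun_prop
  have hmeas : AEStronglyMeasurable (deletionSlope f j)
      (volume.restrict (orderedSimplex (n + 1) θL θR)) :=
    (((hremove _).sub (hremove _)).aestronglyMeasurable measurableSet_orderedSimplex).mul
      hden.aestronglyMeasurable
  exact .of_bound isCompact_orderedSimplex.measure_lt_top hmeas K
    (ae_restrict_of_forall_mem measurableSet_orderedSimplex fun η hη ↦
      abs_deletionSlope_le f hf j (orderedSimplex_subset_Icc hη))

lemma integral_integral_coordSlope_gapRight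
    (hf : LipschitzOnWith K f (Icc (fun _ ↦ θL) (fun _ ↦ θR))) (j : Fin n) :
    ∫ θ in orderedSimplex n θL θR, ∫ z in θ j..gapRight θR θ j.succ, coordSlope f θ j z =
      ∫ η in orderedSimplex (n + 1) θL θR, deletionSlope f j η := by
  rw [integral_orderedSimplex_succ j.succ (integrableOn_deletionSlope f hf j)]
  refine setIntegral_congr_fun measurableSet_orderedSimplex fun θ hθ ↦ ?_
  simp only [gapLeft, Fin.cons_succ, deletionSlope_insertNth_succ]
  rw [integral_Icc_eq_integral_Ioc, intervalIntegral.integral_of_le (le_gapRight_succ hθ j)]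

lemma integral_integral_coordSlope_gapLeft
    (hf : LipschitzOnWith K f (Icc (fun _ ↦ θL) (fun _ ↦ θR))) (j : Fin n) :
    ∫ θ in orderedSimplex n θL θR, ∫ z in θ j..gapLeft θL θ j.castSucc, coordSlope f θ j z =
      -∫ η in orderedSimplex (n + 1) θL θR, deletionSlope f j η := by
  rw [integral_orderedSimplex_succ j.castSucc (integrableOn_deletionSlope f hf j),
    ← integral_neg]
  refine setIntegral_congr_fun measurableSet_orderedSimplex fun θ hθ ↦ ?_
  simp only [gapRight, Fin.snoc_castSucc, deletionSlope_insertNth_castSucc]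
  rw [intervalIntegral.integral_symm, intervalIntegral.integral_of_le (gapLeft_castSucc_le hθ j),
    integral_Icc_eq_integral_Ioc]

end Slopes

noncomputable def jumpIntegrand (f : (Fin n → ℝ) → ℝ) (θ : Fin n → ℝ) (j : Fin n) (t u : ℝ) :
    ℝ :=
  u⁻¹ * (f (update θ j (θ j + u * (t - θ j))) - f θ)

lemma integral_jumpIntegrand (f : (Fin n → ℝ) → ℝ) (θ : Fin n → ℝ) (j : Fin n) (t : ℝ) :
    ∫ u in Ioo (0 : ℝ) 1, jumpIntegrand f θ j t u = ∫ z in θ j..t, coordSlope f θ j z := by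
  -- valid for every `u`: at `u = 0` both sides vanish since `0⁻¹ = 0`
  have hpt (u : ℝ) :
      jumpIntegrand f θ j t u = (t - θ j) * coordSlope f θ j ((t - θ j) * u + θ j) := by
    rcases eq_or_ne (t - θ j) 0 with h | h
    · simp [jumpIntegrand, h]
    rcases eq_or_ne u 0 with rfl | hu
    · simp [jumpIntegrand, coordSlope]
    simp only [jumpIntegrand, coordSlope, add_sub_cancel_right]
    rw [add_comm, mul_comm u]
    field_simp
  rw [← integral_Ioc_eq_integral_Ioo, ← intervalIntegral.integral_of_le zero_le_one]
  simp_rw [hpt]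
  rw [intervalIntegral.integral_const_mul, ← smul_eq_mul,
    intervalIntegral.smul_integral_comp_mul_add]
  simp

lemma update_jump_mem_Icc {θ : Fin n → ℝ} (hθ : θ ∈ Icc (fun _ ↦ θL) (fun _ ↦ θR)) (j : Fin n)
    {t u : ℝ} (ht : t ∈ Icc θL θR) (hu : u ∈ Icc (0 : ℝ) 1) :
    update θ j (θ j + u * (t - θ j)) ∈ Icc (fun _ ↦ θL) (fun _ ↦ θR) :=
  update_mem_Icc hθ j ((convex_Icc θL θR).add_smul_sub_mem ⟨hθ.1 j, hθ.2 j⟩ ht hu)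

noncomputable def siteJumpIntegrand (θL θR : ℝ) (f : (Fin n → ℝ) → ℝ) (j : Fin n)
    (θ : Fin n → ℝ) (u : ℝ) : ℝ :=
  jumpIntegrand f θ j (gapRight θR θ j.succ) u + jumpIntegrand f θ j (gapLeft θL θ j.castSucc) u

lemma hiddenChainGenInt_eq_sum_siteJumpIntegrand {M : ℕ} (hN : 0 < M + 1)
    (f : (Fin (M + 1) → ℝ) → ℝ) (θ : Fin (M + 1) → ℝ) (u : ℝ) :
    hiddenChainGenInt (M + 1) hN θL θR f θ u = ∑ j, siteJumpIntegrand θL θR f j θ u := by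
  let move (j : Fin (M + 1)) (t : ℝ) : ℝ := f (update θ j (θ j + u * (t - θ j)))
  -- `Fin (M + 1 - 1)` is `Fin M`, and `⟨i, _⟩`, `⟨i + 1, _⟩` are `i.castSucc`, `i.succ`
  have hdef : hiddenChainGenInt (M + 1) hN θL θR f θ u =
      u⁻¹ * ((move 0 θL - f θ) + (move (Fin.last M) θR - f θ) +
        ∑ i : Fin M, (move i.castSucc (θ i.succ) + move i.succ (θ i.castSucc) - 2 * f θ)) := rfl
  have hbulk : ∑ i : Fin M, (move i.castSucc (θ i.succ) + move i.succ (θ i.castSucc) - 2 * f θ) =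
      ∑ i : Fin M, (move i.castSucc (θ i.succ) - f θ) +
        ∑ i : Fin M, (move i.succ (θ i.castSucc) - f θ) := by
    rw [← Finset.sum_add_distrib]
    exact Finset.sum_congr rfl fun _ _ ↦ by ring
  simp only [siteJumpIntegrand, Finset.sum_add_distrib]
  rw [hdef, hbulk, Fin.sum_univ_castSucc, Fin.sum_univ_succ]
  simp only [gapRight, Fin.succ_castSucc, Fin.snoc_castSucc, Fin.succ_last, Fin.snoc_last]
  simp only [gapLeft, ← Fin.succ_castSucc, Fin.castSucc_zero, Fin.cons_zero, Fin.cons_succ,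
    jumpIntegrand, ← Finset.mul_sum]
  ring

section Jumps

variable {f : (Fin n → ℝ) → ℝ} {K : ℝ≥0}

lemma abs_jumpIntegrand_le (hf : LipschitzOnWith K f (Icc (fun _ ↦ θL) (fun _ ↦ θR)))
    {θ : Fin n → ℝ} (hθ : θ ∈ Icc (fun _ ↦ θL) (fun _ ↦ θR)) (j : Fin n) {t u : ℝ}
    (ht : t ∈ Icc θL θR) (hu : u ∈ Ioo (0 : ℝ) 1) :
    |jumpIntegrand f θ j t u| ≤ K * (θR - θL) := by
  have hlip := hf.abs_sub_update_le hθ (update_jump_mem_Icc hθ j ht (Ioo_subset_Icc_self hu))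
  rw [add_sub_cancel_left, abs_mul, abs_of_pos hu.1] at hlip
  have htθ : |t - θ j| ≤ θR - θL :=
    abs_sub_le_iff.2 ⟨by linarith [hθ.1 j, ht.2], by linarith [hθ.2 j, ht.1]⟩
  rw [jumpIntegrand, abs_mul, abs_inv, abs_of_pos hu.1]
  calc u⁻¹ * |f (update θ j (θ j + u * (t - θ j))) - f θ|
      ≤ u⁻¹ * (K * (u * |t - θ j|)) := mul_le_mul_of_nonneg_left hlip (inv_nonneg.2 hu.1.le)
    _ = K * |t - θ j| := by field_simp [hu.1.ne']
    _ ≤ K * (θR - θL) := by gcongr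

lemma integrableOn_jumpIntegrand (hf : LipschitzOnWith K f (Icc (fun _ ↦ θL) (fun _ ↦ θR)))
    (j : Fin n) {t : (Fin n → ℝ) → ℝ} (ht : Continuous t)
    (htS : ∀ θ ∈ orderedSimplex n θL θR, t θ ∈ Icc θL θR) :
    IntegrableOn (fun q : (Fin n → ℝ) × ℝ ↦ jumpIntegrand f q.1 j (t q.1) q.2)
      (orderedSimplex n θL θR ×ˢ Ioo 0 1) := by
  have hS : MeasurableSet (orderedSimplex n θL θR ×ˢ Ioo (0 : ℝ) 1) :=
    measurableSet_orderedSimplex.prod measurableSet_Ioo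
  have hfin : volume (orderedSimplex n θL θR ×ˢ Ioo (0 : ℝ) 1) < ⊤ :=
    (measure_mono (prod_mono subset_rfl Ioo_subset_Icc_self)).trans_lt
      (isCompact_orderedSimplex.prod isCompact_Icc).measure_lt_top
  have hmem : MapsTo (fun q : (Fin n → ℝ) × ℝ ↦ update q.1 j (q.1 j + q.2 * (t q.1 - q.1 j)))
      (orderedSimplex n θL θR ×ˢ Ioo 0 1) (Icc (fun _ ↦ θL) (fun _ ↦ θR)) := fun q hq ↦
    update_jump_mem_Icc (orderedSimplex_subset_Icc hq.1) j (htS _ hq.1) (Ioo_subset_Icc_self hq.2)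
  have hcont : ContinuousOn (fun q : (Fin n → ℝ) × ℝ ↦ jumpIntegrand f q.1 j (t q.1) q.2)
      (orderedSimplex n θL θR ×ˢ Ioo 0 1) :=
    (continuous_snd.continuousOn.inv₀ fun q hq ↦ hq.2.1.ne').mul
      ((hf.continuousOn.comp (by fun_prop) hmem).sub
        (hf.continuousOn.comp continuous_fst.continuousOn
          fun q hq ↦ orderedSimplex_subset_Icc hq.1))
  exact .of_bound hfin (hcont.aestronglyMeasurable hS) _ <| ae_restrict_of_forall_mem hS
    fun q hq ↦ abs_jumpIntegrand_le hf (orderedSimplex_subset_Icc hq.1) j (htS _ hq.1) hq.2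

lemma integrableOn_jumpIntegrand_gapRight
    (hf : LipschitzOnWith K f (Icc (fun _ ↦ θL) (fun _ ↦ θR))) (j : Fin n) :
    IntegrableOn (fun q : (Fin n → ℝ) × ℝ ↦ jumpIntegrand f q.1 j (gapRight θR q.1 j.succ) q.2)
      (orderedSimplex n θL θR ×ˢ Ioo 0 1) :=
  integrableOn_jumpIntegrand hf j (t := fun θ ↦ gapRight θR θ j.succ)
    (continuous_gapRight_apply _) fun _ hθ ↦ gapRight_succ_mem_Icc hθ j

lemma integrableOn_jumpIntegrand_gapLeft
    (hf : LipschitzOnWith K f (Icc (fun _ ↦ θL) (fun _ ↦ θR))) (j : Fin n) :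
    IntegrableOn
      (fun q : (Fin n → ℝ) × ℝ ↦ jumpIntegrand f q.1 j (gapLeft θL q.1 j.castSucc) q.2)
      (orderedSimplex n θL θR ×ˢ Ioo 0 1) :=
  integrableOn_jumpIntegrand hf j (t := fun θ ↦ gapLeft θL θ j.castSucc)
    (continuous_gapLeft_apply _) fun _ hθ ↦ gapLeft_castSucc_mem_Icc hθ j

lemma integrableOn_siteJumpIntegrand
    (hf : LipschitzOnWith K f (Icc (fun _ ↦ θL) (fun _ ↦ θR))) (j : Fin n) :
    IntegrableOn (fun q : (Fin n → ℝ) × ℝ ↦ siteJumpIntegrand θL θR f j q.1 q.2)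
      (orderedSimplex n θL θR ×ˢ Ioo 0 1) :=
  (integrableOn_jumpIntegrand_gapRight hf j).add (integrableOn_jumpIntegrand_gapLeft hf j)

lemma setIntegral_siteJumpIntegrand_eq_zero
    (hf : LipschitzOnWith K f (Icc (fun _ ↦ θL) (fun _ ↦ θR))) (j : Fin n) :
    ∫ q in orderedSimplex n θL θR ×ˢ Ioo 0 1, siteJumpIntegrand θL θR f j q.1 q.2 = 0 := by
  have hright := integrableOn_jumpIntegrand_gapRight hf j
  have hleft := integrableOn_jumpIntegrand_gapLeft hf j
  simp only [siteJumpIntegrand]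
  rw [integral_add hright hleft, Measure.volume_eq_prod, setIntegral_prod _ hright,
    setIntegral_prod _ hleft]
  simp only [integral_jumpIntegrand]
  rw [integral_integral_coordSlope_gapRight f hf, integral_integral_coordSlope_gapLeft f hf,
    add_neg_cancel]

end Jumps

end HiddenChain

open HiddenChain

theorem order_statistics_stationary_general (N : ℕ) (hN : 0 < N) (θL θR : ℝ)
    (f : (Fin N → ℝ) → ℝ)
    (hf : ContDiffOn ℝ 1 f (Set.Icc (fun _ => θL) (fun _ => θR))) :
    IntegrableOn (fun q : (Fin N → ℝ) × ℝ => hiddenChainGenInt N hN θL θR f q.1 q.2)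
      (({θ : Fin N → ℝ | Monotone θ ∧ ∀ i, θ i ∈ Set.Icc θL θR}) ×ˢ Set.Ioo 0 1)
      volume ∧
    (∫ θ in {θ : Fin N → ℝ | Monotone θ ∧ ∀ i, θ i ∈ Set.Icc θL θR},
        ((N.factorial : ℝ) / (θR - θL) ^ N) *
          ∫ u in Set.Ioo (0:ℝ) 1, hiddenChainGenInt N hN θL θR f θ u) = 0 := by
  obtain ⟨M, rfl⟩ : ∃ M, N = M + 1 := ⟨N - 1, by omega⟩
  obtain ⟨K, hK⟩ :=
    (hf.locallyLipschitzOn (convex_Icc _ _)).exists_lipschitzOnWith_of_compact isCompact_Icc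
  change IntegrableOn _ (orderedSimplex (M + 1) θL θR ×ˢ Ioo 0 1) _ ∧
    ∫ θ in orderedSimplex (M + 1) θL θR, _ = _
  simp only [hiddenChainGenInt_eq_sum_siteJumpIntegrand hN]
  have hint := integrable_finsetSum Finset.univ fun j _ ↦ integrableOn_siteJumpIntegrand hK j
  refine ⟨hint, ?_⟩
  have hprod := setIntegral_prod _ hint
  dsimp only at hprod
  rw [integral_const_mul, ← hprod, ← Measure.volume_eq_prod,
    integral_finsetSum _ fun j _ ↦ integrableOn_siteJumpIntegrand hK j]
  simp [setIntegral_siteJumpIntegrand_eq_zero hK]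

/-- The joint law of the order statistics of `N` i.i.d. uniforms on `[θL, θR]` (density
`N!/(θR−θL)^N` on the ordered simplex) is stationary for the hidden-parameter model of the
boundary-driven harmonic chain. -/
theorem order_statistics_stationary (N : ℕ) (hN : 0 < N) (θL θR : ℝ) (hLR : θL < θR)
    (f : (Fin N → ℝ) → ℝ)
    (hf : ContDiffOn ℝ 1 f (Set.Icc (fun _ => θL) (fun _ => θR))) :
    IntegrableOn (fun q : (Fin N → ℝ) × ℝ => hiddenChainGenInt N hN θL θR f q.1 q.2)
      (({θ : Fin N → ℝ | Monotone θ ∧ ∀ i, θ i ∈ Set.Icc θL θR}) ×ˢ Set.Ioo 0 1)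
      volume ∧
    (∫ θ in {θ : Fin N → ℝ | Monotone θ ∧ ∀ i, θ i ∈ Set.Icc θL θR},
        ((N.factorial : ℝ) / (θR - θL) ^ N) *
          ∫ u in Set.Ioo (0:ℝ) 1, hiddenChainGenInt N hN θL θR f θ u) = 0 :=
  order_statistics_stationary_general N hN θL θR f hf
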